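/- arXiv:2203.16803 — 2 statements merged into one kernel-verified Lean document; each statement's English description precedes it below -/
import Mathlib

section
/- Let M be a finite MDP with alarm region, let x_0 ∉ X_a be the initial state, and let Δ ∈ [0,1]. Then the supremum of J_M(π) over all history-dependent policies π of M satisfying P^π(∃ t ∈ {0,…,T}: X_t ∈ X_a) ≤ Δ equals the supremum of Ĵ(π̂) over all history-dependent policies π̂ of the binary augmented MDP M̂ satisfying P^π̂(Y_T = 1) ≤ Δ. -/
/- Common framework: finite MDPs with alarm region, trajectories,
   history-dependent policies, trajectory laws, objectives. -/

attribute [local instance] Classical.propDecidable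

noncomputable section

/-- A finite MDP with alarm region `Xa`, horizon `T ≥ 1`, transition pmf `P`,
running rewards `r` and terminal reward `rT`. -/
structure MDP (X A : Type) [Fintype X] [Fintype A] where
  T : ℕ
  hT : 1 ≤ T
  P : X → A → X → ℝ
  P_nonneg : ∀ x a x', 0 ≤ P x a x'
  P_sum : ∀ x a, ∑ x', P x a x' = 1
  r : Fin T → X → A → ℝ
  rT : X → ℝ
  Xa : Set X

variable {X A : Type} [Fintype X] [Fintype A]

/-- A trajectory `(x₀,…,x_T, a₀,…,a_{T-1})`. -/
abbrev Traj (M : MDP X A) := (Fin (M.T + 1) → X) × (Fin M.T → A)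

/-- A history-dependent randomized policy: at each time `t < T` it maps the
history `(x₀,…,x_t, a₀,…,a_{t-1})` to a pmf on actions. -/
structure HistPolicy (M : MDP X A) where
  π : (t : Fin M.T) → (Fin (t.val + 1) → X) → (Fin t.val → A) → A → ℝ
  nonneg : ∀ t xs as a, 0 ≤ π t xs as a
  sum_one : ∀ t xs as, ∑ a, π t xs as a = 1

/-- A policy is Markov if at each time it depends only on the current state. -/
def IsMarkov {M : MDP X A} (p : HistPolicy M) : Prop :=
  ∀ (t : Fin M.T) (xs xs' : Fin (t.val + 1) → X) (as as' : Fin t.val → A),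
    xs (Fin.last t.val) = xs' (Fin.last t.val) → p.π t xs as = p.π t xs' as'

/-- The state part of the history at time `t` determined by a trajectory. -/
def histStates {M : MDP X A} (τ : Traj M) (t : Fin M.T) : Fin (t.val + 1) → X :=
  fun i => τ.1 (Fin.castLE (by have := t.isLt; omega) i)

/-- The action part of the history at time `t` determined by a trajectory. -/
def histActs {M : MDP X A} (τ : Traj M) (t : Fin M.T) : Fin t.val → A :=
  fun i => τ.2 (Fin.castLE (by have := t.isLt; omega) i)

/-- The probability mass of a trajectory under policy `p` with initial state `x0`. -/
def trajProb (M : MDP X A) (p : HistPolicy M) (x0 : X) (τ : Traj M) : ℝ :=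
  (if τ.1 0 = x0 then (1 : ℝ) else 0) *
    ∏ t : Fin M.T,
      p.π t (histStates τ t) (histActs τ t) (τ.2 t) *
        M.P (τ.1 t.castSucc) (τ.2 t) (τ.1 t.succ)

/-- Probability of an event (a set of trajectories) under the trajectory law. -/
def probEvent (M : MDP X A) (p : HistPolicy M) (x0 : X) (E : Traj M → Prop) : ℝ :=
  ∑ τ : Traj M, if E τ then trajProb M p x0 τ else 0

/-- The objective `J_M(π) = E[Σ_t r_t(X_t,A_t) + r_T(X_T)]`. -/
def J (M : MDP X A) (p : HistPolicy M) (x0 : X) : ℝ :=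
  ∑ τ : Traj M, trajProb M p x0 τ *
    (∑ t : Fin M.T, M.r t (τ.1 t.castSucc) (τ.2 t) + M.rT (τ.1 (Fin.last M.T)))

/-- The binary augmented MDP: the extra `Bool` state records whether an alarm
has been triggered so far. -/
def binAug (M : MDP X A) : MDP (X × Bool) A where
  T := M.T
  hT := M.hT
  P := fun s a s' =>
    if s'.2 = (s.2 || decide (s'.1 ∈ M.Xa)) then M.P s.1 a s'.1 else 0
  P_nonneg := by
    intro s a s'
    try dsimp only
    split
    · exact M.P_nonneg s.1 a s'.1
    · exact le_refl 0
  P_sum := by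
    intro s a
    rw [Fintype.sum_prod_type]
    have h : ∀ x' : X,
        (∑ y : Bool, if y = (s.2 || decide (x' ∈ M.Xa)) then M.P s.1 a x' else 0)
          = M.P s.1 a x' := by
      intro x'; simp
    rw [Finset.sum_congr rfl fun x' _ => h x']
    exact M.P_sum s.1 a
  r := fun t s a => M.r t s.1 a
  rT := fun s => M.rT s.1
  Xa := {s | s.1 ∈ M.Xa}

/-! Along every trajectory of `binAug M` of positive probability the flag is a function of the
states: it records whether some state at a positive time lies in the alarm region. So the
trajectories of positive probability of `binAug M` are exactly the flagged trajectories of `M`, and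
policies translate both ways (forget the flag, or recompute it from the history) without changing
the trajectory law, hence without changing the objective. Since `x0 ∉ M.Xa`, the final flag is set
exactly when the trajectory visits the alarm region, so the two constraints agree as well. -/

section AlarmFlag

variable {α : Type*} (S : Set α)

/-- Time `0` is excluded, matching the initial flag `false` of `binAug`. -/
def alarmFlag {n : ℕ} (xs : Fin n → α) (i : Fin n) : Bool :=
  decide (∃ j : Fin n, 0 < (j : ℕ) ∧ j ≤ i ∧ xs j ∈ S)

theorem alarmFlag_zero {n : ℕ} (xs : Fin (n + 1) → α) : alarmFlag S xs 0 = false := by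
  simp only [alarmFlag, decide_eq_false_iff_not, not_exists, not_and]
  intro j hj hj0
  simp [Fin.le_zero_iff.mp hj0] at hj

theorem alarmFlag_succ {n : ℕ} (xs : Fin (n + 1) → α) (i : Fin n) :
    alarmFlag S xs i.succ = (alarmFlag S xs i.castSucc || decide (xs i.succ ∈ S)) := by
  simp only [alarmFlag, ← Bool.decide_or, decide_eq_decide]
  constructor
  · rintro ⟨j, hj, hji, hjS⟩
    rcases hji.lt_or_eq with hlt | rfl
    · exact .inl ⟨j, hj, Fin.le_castSucc_iff.mpr hlt, hjS⟩
    · exact .inr hjS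
  · rintro (⟨j, hj, hji, hjS⟩ | hS)
    · exact ⟨j, hj, hji.trans (Fin.castSucc_le_succ i), hjS⟩
    · exact ⟨i.succ, i.succ_pos, le_rfl, hS⟩

theorem alarmFlag_last {n : ℕ} (xs : Fin (n + 1) → α) :
    alarmFlag S xs (Fin.last n) = true ↔ ∃ j : Fin (n + 1), 0 < (j : ℕ) ∧ xs j ∈ S := by
  simp [alarmFlag, Fin.le_last]

theorem alarmFlag_castLE {m n : ℕ} (h : m ≤ n) (xs : Fin n → α) (i : Fin m) :
    alarmFlag S (xs ∘ Fin.castLE h) i = alarmFlag S xs (Fin.castLE h i) := by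
  simp only [alarmFlag, decide_eq_decide, Function.comp_apply]
  constructor
  · rintro ⟨j, hj, hji, hjS⟩
    exact ⟨Fin.castLE h j, hj, hji, hjS⟩
  · rintro ⟨j, hj, hji, hjS⟩
    exact ⟨⟨j, Nat.lt_of_le_of_lt hji i.isLt⟩, hj, hji, hjS⟩

theorem eq_alarmFlag_of_succ {n : ℕ} (xs : Fin (n + 1) → α) (ys : Fin (n + 1) → Bool)
    (h0 : ys 0 = false)
    (hsucc : ∀ i : Fin n, ys i.succ = (ys i.castSucc || decide (xs i.succ ∈ S))) :
    ys = alarmFlag S xs := by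
  funext i
  induction i using Fin.induction with
  | zero => rw [h0, alarmFlag_zero]
  | succ i ih => rw [hsucc, ih, alarmFlag_succ]

end AlarmFlag

section FlaggedTrajectories

variable {M : MDP X A}

theorem trajProb_eq_zero_of_ne_start (p : HistPolicy M) {x0 : X} {τ : Traj M} (h : τ.1 0 ≠ x0) :
    trajProb M p x0 τ = 0 := by
  rw [trajProb, if_neg h, zero_mul]

theorem trajProb_eq_zero_of_P_eq_zero (p : HistPolicy M) (x0 : X) {τ : Traj M} (t : Fin M.T)
    (h : M.P (τ.1 t.castSucc) (τ.2 t) (τ.1 t.succ) = 0) : trajProb M p x0 τ = 0 := by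
  rw [trajProb, Finset.prod_eq_zero (Finset.mem_univ t) (by rw [h, mul_zero]), mul_zero]

def liftTraj (τ : Traj M) : Traj (binAug M) :=
  (fun i => (τ.1 i, alarmFlag M.Xa τ.1 i), τ.2)

theorem liftTraj_injective : Function.Injective (liftTraj (M := M)) := fun _ _ h =>
  Prod.ext (funext fun i => congrArg (fun σ : Traj (binAug M) => (σ.1 i).1) h)
    (congrArg (fun σ : Traj (binAug M) => σ.2) h)

theorem mem_range_liftTraj_of_trajProb_ne_zero (q : HistPolicy (binAug M)) (x0 : X)
    {σ : Traj (binAug M)} (h : trajProb (binAug M) q (x0, false) σ ≠ 0) :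
    σ ∈ Set.range liftTraj := by
  have hstart : σ.1 0 = (x0, false) := not_imp_comm.mp (trajProb_eq_zero_of_ne_start q) h
  have hstep : ∀ t : Fin M.T,
      (σ.1 t.succ).2 = ((σ.1 t.castSucc).2 || decide ((σ.1 t.succ).1 ∈ M.Xa)) := by
    intro t
    by_contra hne
    exact h (trajProb_eq_zero_of_P_eq_zero q _ t (if_neg hne))
  have hflag := eq_alarmFlag_of_succ M.Xa (fun i => (σ.1 i).1) (fun i => (σ.1 i).2)
    (by rw [hstart]) hstep
  exact ⟨((fun i => (σ.1 i).1), σ.2),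
    Prod.ext (funext fun i => Prod.ext rfl (congrFun hflag i).symm) rfl⟩

theorem sum_binAug_eq_sum_liftTraj (q : HistPolicy (binAug M)) (x0 : X)
    (g : Traj (binAug M) → ℝ) (hg : ∀ σ, trajProb (binAug M) q (x0, false) σ = 0 → g σ = 0) :
    ∑ σ, g σ = ∑ τ, g (liftTraj τ) :=
  (Fintype.sum_of_injective liftTraj liftTraj_injective _ g
    (fun σ hσ => hg σ (not_imp_comm.mp (mem_range_liftTraj_of_trajProb_ne_zero q x0) hσ))
    fun _ => rfl).symm

theorem liftTraj_last_flag_iff {τ : Traj M} (h0 : τ.1 0 ∉ M.Xa) :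
    ((liftTraj τ).1 (Fin.last M.T)).2 = true ↔ ∃ t, τ.1 t ∈ M.Xa := by
  refine (alarmFlag_last M.Xa τ.1).trans ⟨fun ⟨j, _, hj⟩ => ⟨j, hj⟩, fun ⟨j, hj⟩ => ⟨j, ?_, hj⟩⟩
  exact Nat.pos_of_ne_zero fun hj0 => h0 (by rwa [show j = 0 from Fin.ext hj0] at hj)

def Agrees (p : HistPolicy M) (q : HistPolicy (binAug M)) : Prop :=
  ∀ (t : Fin M.T) (xs : Fin (t.val + 1) → X) (as : Fin t.val → A),
    q.π t (fun i => (xs i, alarmFlag M.Xa xs i)) as = p.π t xs as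

def HistPolicy.toBinAug (p : HistPolicy M) : HistPolicy (binAug M) where
  π t xs as := p.π t (fun i => (xs i).1) as
  nonneg t _ as := p.nonneg t _ as
  sum_one t _ as := p.sum_one t _ as

def HistPolicy.ofBinAug (q : HistPolicy (binAug M)) : HistPolicy M where
  π t xs as := q.π t (fun i => (xs i, alarmFlag M.Xa xs i)) as
  nonneg t _ as := q.nonneg t _ as
  sum_one t _ as := q.sum_one t _ as

theorem agrees_toBinAug (p : HistPolicy M) : Agrees p p.toBinAug := fun _ _ _ => rfl

theorem agrees_ofBinAug (q : HistPolicy (binAug M)) : Agrees q.ofBinAug q := fun _ _ _ => rfl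

theorem histStates_liftTraj (τ : Traj M) (t : Fin M.T) :
    histStates (liftTraj τ) t
      = fun i => (histStates τ t i, alarmFlag M.Xa (histStates τ t) i) :=
  funext fun i => Prod.ext rfl (alarmFlag_castLE M.Xa _ τ.1 i).symm

theorem trajProb_liftTraj {p : HistPolicy M} {q : HistPolicy (binAug M)} (hpq : Agrees p q)
    (x0 : X) (τ : Traj M) :
    trajProb (binAug M) q (x0, false) (liftTraj τ) = trajProb M p x0 τ := by
  have hstart : (liftTraj τ).1 0 = (x0, false) ↔ τ.1 0 = x0 := by
    simp only [liftTraj, Prod.mk.injEq]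
    exact and_iff_left (alarmFlag_zero M.Xa τ.1)
  have hpolicy (t : Fin M.T) :
      q.π t (histStates (liftTraj τ) t) (histActs (liftTraj τ) t)
        = p.π t (histStates τ t) (histActs τ t) := by
    rw [histStates_liftTraj]
    exact hpq t _ _
  refine congrArg₂ (· * ·) (by simp only [hstart])
    (Finset.prod_congr rfl fun t _ => congrArg₂ (· * ·) (congrFun (hpolicy t) _) ?_)
  exact if_pos (alarmFlag_succ M.Xa τ.1 t)

theorem probEvent_binAug_last_flag {p : HistPolicy M} {q : HistPolicy (binAug M)}
    (hpq : Agrees p q) {x0 : X} (hx0 : x0 ∉ M.Xa) :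
    probEvent (binAug M) q (x0, false) (fun σ => (σ.1 (Fin.last (binAug M).T)).2 = true)
      = probEvent M p x0 (fun τ => ∃ t, τ.1 t ∈ M.Xa) := by
  rw [probEvent, sum_binAug_eq_sum_liftTraj q x0 _ fun σ hσ => by simp [hσ]]
  refine Finset.sum_congr rfl fun τ _ => ?_
  rw [trajProb_liftTraj hpq]
  by_cases hτ : τ.1 0 = x0
  · congr 1
    exact propext (liftTraj_last_flag_iff (hτ ▸ hx0))
  · simp [trajProb_eq_zero_of_ne_start p hτ]

theorem J_binAug {p : HistPolicy M} {q : HistPolicy (binAug M)} (hpq : Agrees p q) (x0 : X) :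
    J (binAug M) q (x0, false) = J M p x0 := by
  rw [J, sum_binAug_eq_sum_liftTraj q x0 _ fun σ hσ => by rw [hσ, zero_mul]]
  exact Finset.sum_congr rfl fun τ _ => by rw [trajProb_liftTraj hpq]; rfl

end FlaggedTrajectories

theorem impact_hist_eq_binAug_hist_general
    (M : MDP X A) (x0 : X) (hx0 : x0 ∉ M.Xa) (Δ : ℝ) :
    sSup {v : ℝ | ∃ p : HistPolicy M,
        probEvent M p x0 (fun τ => ∃ t, τ.1 t ∈ M.Xa) ≤ Δ ∧ v = J M p x0} =
    sSup {v : ℝ | ∃ q : HistPolicy (binAug M),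
        probEvent (binAug M) q (x0, false)
          (fun σ => (σ.1 (Fin.last (binAug M).T)).2 = true) ≤ Δ ∧
        v = J (binAug M) q (x0, false)} := by
  congr 1
  ext v
  constructor
  · rintro ⟨p, hp, rfl⟩
    exact ⟨p.toBinAug, (probEvent_binAug_last_flag (agrees_toBinAug p) hx0).trans_le hp,
      (J_binAug (agrees_toBinAug p) x0).symm⟩
  · rintro ⟨q, hq, rfl⟩
    exact ⟨q.ofBinAug, (probEvent_binAug_last_flag (agrees_ofBinAug q) hx0).symm.trans_le hq,
      J_binAug (agrees_ofBinAug q) x0⟩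

/-- The optimal attack impact over history-dependent policies
under the temporally joint chance constraint equals the optimal impact over
history-dependent policies of the binary augmented MDP under the final-flag
constraint. -/
theorem impact_hist_eq_binAug_hist [Nonempty X] [Nonempty A]
    (M : MDP X A) (x0 : X) (hx0 : x0 ∉ M.Xa) (Δ : ℝ) (hΔ : Δ ∈ Set.Icc (0 : ℝ) 1) :
    sSup {v : ℝ | ∃ p : HistPolicy M,
        probEvent M p x0 (fun τ => ∃ t, τ.1 t ∈ M.Xa) ≤ Δ ∧ v = J M p x0} =
    sSup {v : ℝ | ∃ q : HistPolicy (binAug M),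
        probEvent (binAug M) q (x0, false)
          (fun σ => (σ.1 (Fin.last (binAug M).T)).2 = true) ≤ Δ ∧
        v = J (binAug M) q (x0, false)} :=
  impact_hist_eq_binAug_hist_general M x0 hx0 Δ

end
end

section
/- Let M be a finite MDP with alarm region and x_0 an initial state. For every history-dependent policy π of M, there exists a Markov policy π^m of M such that for every t ∈ {0,…,T−1} the joint distribution of (X_t, A_t) under P^{π^m} equals the joint distribution of (X_t, A_t) under P^π, and the distribution of X_T under P^{π^m} equals that under P^π. In particular, J_M(π^m) = J_M(π). -/
/- Common framework: finite MDPs with alarm region, trajectories,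
   history-dependent policies, trajectory laws, objectives. -/

attribute [local instance] Classical.propDecidable

noncomputable section

variable {X A : Type} [Fintype X] [Fintype A]

section Aux
set_option linter.unusedSectionVars false



lemma snoc_lt {Y : Type} {n : ℕ} (f : Fin (n+1) → Y) (y : Y) (k : Fin (n+2)) (hk : k.val < n+1) :
    (Fin.snoc f y : Fin (n+2) → Y) k = f ⟨k.val, hk⟩ := by
  exact Fin.snoc_castSucc (α := fun _ => Y) (x := y) (p := f) (i := ⟨k.val, hk⟩)

lemma sum_snoc {Y : Type} [Fintype Y] {β : Type} [AddCommMonoid β] (n : ℕ)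
    (G : (Fin (n+1) → Y) → β) :
    ∑ f, G f = ∑ g : Fin n → Y, ∑ y, G (Fin.snoc g y) := by
  rw [← (Fin.snocEquiv (fun _ => Y)).sum_comp G, Fintype.sum_prod_type]
  exact Finset.sum_comm

variable (M : MDP X A) (x0 : X)

/-- Partial trajectory probability up to time `n`, defined recursively. -/
def phi (p : HistPolicy M) : (n : ℕ) → (hn : n ≤ M.T) → (Fin (n+1) → X) → (Fin n → A) → ℝ
  | 0, _, xs, _ => if xs 0 = x0 then (1:ℝ) else 0
  | (n+1), hn, xs, as =>
      phi p n (Nat.le_of_succ_le hn) (fun j => xs j.castSucc) (fun j => as j.castSucc) *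
        (p.π ⟨n, hn⟩ (fun j => xs j.castSucc) (fun j => as j.castSucc) (as (Fin.last n)) *
          M.P (xs (Fin.last n).castSucc) (as (Fin.last n)) (xs (Fin.last (n+1))))

lemma phi_eq (p : HistPolicy M) : ∀ (n : ℕ) (hn : n ≤ M.T) (xs : Fin (n+1) → X) (as : Fin n → A),
    phi M x0 p n hn xs as =
      (if xs 0 = x0 then (1:ℝ) else 0) *
        ∏ i : Fin n,
          p.π ⟨i.val, lt_of_lt_of_le i.isLt hn⟩
            (fun j => xs (Fin.castLE (Nat.succ_le_succ i.isLt.le) j))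
            (fun j => as (Fin.castLE i.isLt.le j)) (as i) *
          M.P (xs i.castSucc) (as i) (xs i.succ) := by
  intro n
  induction n with
  | zero => intro hn xs as; simp [phi]
  | succ n IH =>
    intro hn xs as
    show phi M x0 p n _ _ _ * _ = _
    rw [IH]
    rw [Fin.prod_univ_castSucc]
    rw [Fin.castSucc_zero, mul_assoc]
    rfl

lemma phi_nonneg (p : HistPolicy M) (n : ℕ) (hn : n ≤ M.T) (xs : Fin (n+1) → X) (as : Fin n → A) :
    0 ≤ phi M x0 p n hn xs as := by
  induction n with
  | zero => dsimp [phi]; split <;> norm_num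
  | succ n IH =>
    exact mul_nonneg (IH _ _ _) (mul_nonneg (p.nonneg _ _ _ _) (M.P_nonneg _ _ _))

lemma phi_snoc (p : HistPolicy M) (n : ℕ) (hn : n+1 ≤ M.T)
    (xs : Fin (n+1) → X) (as : Fin n → A) (x' : X) (a : A) :
    phi M x0 p (n+1) hn (Fin.snoc xs x') (Fin.snoc as a) =
      phi M x0 p n (Nat.le_of_succ_le hn) xs as *
        (p.π ⟨n, hn⟩ xs as a * M.P (xs (Fin.last n)) a x') := by
  show phi M x0 p n _ _ _ * _ = _
  simp only [Fin.snoc_castSucc, Fin.snoc_last]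

/-- Expected value of a history functional. -/
def Ssum (p : HistPolicy M) (n : ℕ) (hn : n ≤ M.T)
    (F : (Fin (n+1) → X) → (Fin n → A) → ℝ) : ℝ :=
  ∑ xs : Fin (n+1) → X, ∑ as : Fin n → A, F xs as * phi M x0 p n hn xs as

lemma Ssum_nonneg (p : HistPolicy M) (n : ℕ) (hn : n ≤ M.T)
    (F : (Fin (n+1) → X) → (Fin n → A) → ℝ) (hF : ∀ xs as, 0 ≤ F xs as) :
    0 ≤ Ssum M x0 p n hn F :=
  Finset.sum_nonneg fun xs _ => Finset.sum_nonneg fun as _ =>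
    mul_nonneg (hF xs as) (phi_nonneg M x0 p n hn xs as)

lemma Ssum_step (p : HistPolicy M) (n : ℕ) (hn : n+1 ≤ M.T)
    (F : (Fin (n+1) → X) → (Fin n → A) → ℝ) :
    Ssum M x0 p (n+1) hn (fun xs as => F (fun i => xs i.castSucc) (fun i => as i.castSucc)) =
      Ssum M x0 p n (Nat.le_of_succ_le hn) F := by
  unfold Ssum
  rw [sum_snoc (n+1)]
  refine Finset.sum_congr rfl fun ys _ => ?_
  have step1 : ∀ x' : X, (∑ as : Fin (n+1) → A,
      F (fun i => (Fin.snoc ys x' : Fin (n+2) → X) i.castSucc) (fun i => as i.castSucc) *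
        phi M x0 p (n+1) hn (Fin.snoc ys x') as)
      = ∑ bs : Fin n → A, ∑ a, F ys bs * (phi M x0 p n (Nat.le_of_succ_le hn) ys bs *
          (p.π ⟨n, hn⟩ ys bs a * M.P (ys (Fin.last n)) a x')) := by
    intro x'
    rw [sum_snoc n]
    refine Finset.sum_congr rfl fun bs _ => Finset.sum_congr rfl fun a _ => ?_
    rw [phi_snoc]
    have e1 : (fun i : Fin (n+1) => (Fin.snoc ys x' : Fin (n+2) → X) i.castSucc) = ys := by
      funext i; simp
    have e2 : (fun i : Fin n => (Fin.snoc bs a : Fin (n+1) → A) i.castSucc) = bs := by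
      funext i; simp
    rw [e1, e2]
  simp only [step1]
  rw [Finset.sum_comm]
  refine Finset.sum_congr rfl fun bs _ => ?_
  rw [Finset.sum_comm]
  calc (∑ a, ∑ x', F ys bs * (phi M x0 p n (Nat.le_of_succ_le hn) ys bs *
          (p.π ⟨n, hn⟩ ys bs a * M.P (ys (Fin.last n)) a x')))
      = ∑ a, F ys bs * phi M x0 p n (Nat.le_of_succ_le hn) ys bs * p.π ⟨n, hn⟩ ys bs a *
          (∑ x', M.P (ys (Fin.last n)) a x') := by
        refine Finset.sum_congr rfl fun a _ => ?_
        rw [Finset.mul_sum]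
        exact Finset.sum_congr rfl fun x' _ => by ring
    _ = F ys bs * phi M x0 p n (Nat.le_of_succ_le hn) ys bs := by
        simp only [M.P_sum, mul_one]
        rw [← Finset.mul_sum, p.sum_one, mul_one]

lemma Ssum_lift (p : HistPolicy M) :
    ∀ (m : ℕ) (hm : m ≤ M.T) (n : ℕ) (hnm : n ≤ m) (F : (Fin (n+1) → X) → (Fin n → A) → ℝ),
      Ssum M x0 p m hm
        (fun xs as => F (fun i => xs (Fin.castLE (Nat.succ_le_succ hnm) i))
          (fun i => as (Fin.castLE hnm i))) =
      Ssum M x0 p n (le_trans hnm hm) F := by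
  intro m
  induction m with
  | zero =>
    intro hm n hnm F
    obtain rfl : n = 0 := Nat.le_zero.mp hnm
    rfl
  | succ m IH =>
    intro hm n hnm F
    rcases Nat.lt_or_ge n (m+1) with h | h
    · have hnm' : n ≤ m := Nat.lt_succ_iff.mp h
      refine Eq.trans ?_ (IH (Nat.le_of_succ_le hm) n hnm' F)
      exact Ssum_step M x0 p m hm (fun xs' as' =>
        F (fun i => xs' (Fin.castLE (Nat.succ_le_succ hnm') i))
          (fun i => as' (Fin.castLE hnm' i)))
    · obtain rfl : n = m+1 := le_antisymm hnm h
      rfl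

lemma trajProb_eq_phi (p : HistPolicy M) (τ : Traj M) :
    trajProb M p x0 τ = phi M x0 p M.T le_rfl τ.1 τ.2 := by
  rw [phi_eq]
  rfl

lemma probEvent_eq_Ssum (p : HistPolicy M) (E : Traj M → Prop) :
    probEvent M p x0 E =
      Ssum M x0 p M.T le_rfl (fun xs as => if E (xs, as) then 1 else 0) := by
  unfold probEvent Ssum
  rw [Fintype.sum_prod_type]
  refine Finset.sum_congr rfl fun xs _ => Finset.sum_congr rfl fun as _ => ?_
  by_cases h : E (xs, as)
  · simp only [h, if_pos, one_mul]
    exact trajProb_eq_phi M x0 p (xs, as)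
  · simp [h]

/-- marginal distribution of the state at time `n`. -/
def stateD (p : HistPolicy M) (n : ℕ) (hn : n ≤ M.T) (x : X) : ℝ :=
  Ssum M x0 p n hn (fun xs _ => if xs (Fin.last n) = x then 1 else 0)

/-- joint distribution of state and action at time `n`. -/
def jointD (p : HistPolicy M) (n : ℕ) (hn : n < M.T) (x : X) (a : A) : ℝ :=
  Ssum M x0 p (n+1) hn (fun xs as =>
    if xs (Fin.castSucc (Fin.last n)) = x ∧ as (Fin.last n) = a then 1 else 0)

def Kfun (p : HistPolicy M) (n : ℕ) (hn : n < M.T) (x : X) (a : A) : ℝ :=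
  ∑ xs : Fin (n+1) → X, ∑ as : Fin n → A,
    (if xs (Fin.last n) = x then 1 else 0) * phi M x0 p n hn.le xs as * p.π ⟨n, hn⟩ xs as a

lemma jointD_eq_Kfun (p : HistPolicy M) (n : ℕ) (hn : n < M.T) (x : X) (a : A) :
    jointD M x0 p n hn x a = Kfun M x0 p n hn x a := by
  unfold jointD Kfun Ssum
  rw [sum_snoc (n+1)]
  refine Finset.sum_congr rfl fun ys _ => ?_
  have step1 : ∀ y : X, (∑ as : Fin (n+1) → A,
      (if (Fin.snoc ys y : Fin (n+2) → X) (Fin.castSucc (Fin.last n)) = x ∧ as (Fin.last n) = a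
        then (1:ℝ) else 0) * phi M x0 p (n+1) hn (Fin.snoc ys y) as)
      = ∑ bs : Fin n → A, ∑ b : A,
          (if ys (Fin.last n) = x ∧ b = a then (1:ℝ) else 0) *
            (phi M x0 p n (Nat.le_of_succ_le hn) ys bs *
              (p.π ⟨n, hn⟩ ys bs b * M.P (ys (Fin.last n)) b y)) := by
    intro y
    rw [sum_snoc n]
    refine Finset.sum_congr rfl fun bs _ => Finset.sum_congr rfl fun b _ => ?_
    rw [phi_snoc]
    have e1 : (Fin.snoc ys y : Fin (n+2) → X) (Fin.castSucc (Fin.last n)) = ys (Fin.last n) := by simp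
    have e2 : (Fin.snoc bs b : Fin (n+1) → A) (Fin.last n) = b := by simp
    rw [e1, e2]
  simp only [step1]
  rw [Finset.sum_comm]
  refine Finset.sum_congr rfl fun bs _ => ?_
  rw [Finset.sum_comm]
  calc (∑ b, ∑ y, (if ys (Fin.last n) = x ∧ b = a then (1:ℝ) else 0) *
          (phi M x0 p n (Nat.le_of_succ_le hn) ys bs *
            (p.π ⟨n, hn⟩ ys bs b * M.P (ys (Fin.last n)) b y)))
      = ∑ b, (if ys (Fin.last n) = x ∧ b = a then (1:ℝ) else 0) *
          phi M x0 p n (Nat.le_of_succ_le hn) ys bs * p.π ⟨n, hn⟩ ys bs b *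
          (∑ y, M.P (ys (Fin.last n)) b y) := by
        refine Finset.sum_congr rfl fun b _ => ?_
        rw [Finset.mul_sum]
        · exact Finset.sum_congr rfl fun y _ => by ring
    _ = (if ys (Fin.last n) = x then 1 else 0) * phi M x0 p n hn.le ys bs *
          p.π ⟨n, hn⟩ ys bs a := by
        simp only [M.P_sum, mul_one]
        by_cases hc : ys (Fin.last n) = x
        · simp [hc]
        · simp [hc]

lemma Kfun_sum (p : HistPolicy M) (n : ℕ) (hn : n < M.T) (x : X) :
    ∑ a, Kfun M x0 p n hn x a = stateD M x0 p n hn.le x := by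
  unfold Kfun stateD Ssum
  rw [Finset.sum_comm]
  refine Finset.sum_congr rfl fun xs _ => ?_
  rw [Finset.sum_comm]
  refine Finset.sum_congr rfl fun as _ => ?_
  rw [← Finset.mul_sum, p.sum_one, mul_one]

lemma stateD_succ (p : HistPolicy M) (n : ℕ) (hn : n + 1 ≤ M.T) (x' : X) :
    stateD M x0 p (n+1) hn x' = ∑ x, ∑ a, Kfun M x0 p n hn x a * M.P x a x' := by
  trans (∑ ys : Fin (n+1) → X, ∑ bs : Fin n → A, ∑ a : A,
      phi M x0 p n (Nat.le_of_succ_le hn) ys bs *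
        (p.π ⟨n, hn⟩ ys bs a * M.P (ys (Fin.last n)) a x'))
  · unfold stateD Ssum
    rw [sum_snoc (n+1)]
    refine Finset.sum_congr rfl fun ys _ => ?_
    have step1 : ∀ y : X, (∑ as : Fin (n+1) → A,
        (if (Fin.snoc ys y : Fin (n+2) → X) (Fin.last (n+1)) = x' then (1:ℝ) else 0) *
          phi M x0 p (n+1) hn (Fin.snoc ys y) as)
        = ∑ bs : Fin n → A, ∑ a : A, (if y = x' then (1:ℝ) else 0) *
            (phi M x0 p n (Nat.le_of_succ_le hn) ys bs *
              (p.π ⟨n, hn⟩ ys bs a * M.P (ys (Fin.last n)) a y)) := by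
      intro y
      rw [sum_snoc n]
      refine Finset.sum_congr rfl fun bs _ => Finset.sum_congr rfl fun b _ => ?_
      rw [phi_snoc]
      have e1 : (Fin.snoc ys y : Fin (n+2) → X) (Fin.last (n+1)) = y := by simp
      rw [e1]
    simp only [step1]
    rw [Finset.sum_comm]
    refine Finset.sum_congr rfl fun bs _ => ?_
    rw [Finset.sum_comm]
    refine Finset.sum_congr rfl fun b _ => ?_
    simp [ite_mul]
  · symm
    unfold Kfun
    simp only [Finset.sum_mul]
    rw [Finset.sum_comm]
    rw [Finset.sum_congr rfl fun a (_ : a ∈ Finset.univ) => Finset.sum_comm (γ := X)]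
    rw [Finset.sum_congr rfl fun a (_ : a ∈ Finset.univ) =>
      Finset.sum_congr rfl fun ys (_ : ys ∈ Finset.univ) => Finset.sum_comm (γ := X)]
    rw [Finset.sum_comm]
    refine Finset.sum_congr rfl fun ys _ => ?_
    rw [Finset.sum_comm]
    refine Finset.sum_congr rfl fun bs _ => Finset.sum_congr rfl fun a _ => ?_
    simp [ite_mul]
    ring

lemma stateD_zero (p : HistPolicy M) (hn : 0 ≤ M.T) (x : X) :
    stateD M x0 p 0 hn x = if x = x0 then 1 else 0 := by
  unfold stateD Ssum
  rw [← (Equiv.funUnique (Fin 1) X).symm.sum_comp]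
  simp [phi]
  by_cases h : x = x0
  · subst h; simp
  · simp [h]
    exact fun y => h y.symm

lemma stateD_nonneg (p : HistPolicy M) (n : ℕ) (hn : n ≤ M.T) (x : X) :
    0 ≤ stateD M x0 p n hn x :=
  Ssum_nonneg M x0 p n hn _ (fun xs as => by split <;> norm_num)

lemma jointD_nonneg (p : HistPolicy M) (n : ℕ) (hn : n < M.T) (x : X) (a : A) :
    0 ≤ jointD M x0 p n hn x a :=
  Ssum_nonneg M x0 p (n+1) hn _ (fun xs as => by split <;> norm_num)

lemma jointD_sum (p : HistPolicy M) (n : ℕ) (hn : n < M.T) (x : X) :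
    ∑ a, jointD M x0 p n hn x a = stateD M x0 p n hn.le x := by
  simp only [jointD_eq_Kfun]
  exact Kfun_sum M x0 p n hn x

/-- The Markov kernel extracted from the marginals of `p`. -/
def ker (p : HistPolicy M) (n : ℕ) (hn : n < M.T) (x : X) (a : A) : ℝ :=
  if stateD M x0 p n hn.le x = 0 then (Fintype.card A : ℝ)⁻¹
  else jointD M x0 p n hn x a / stateD M x0 p n hn.le x

lemma ker_mul (p : HistPolicy M) (n : ℕ) (hn : n < M.T) (x : X) (a : A) :
    ker M x0 p n hn x a * stateD M x0 p n hn.le x = jointD M x0 p n hn x a := by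
  unfold ker
  by_cases h : stateD M x0 p n hn.le x = 0
  · rw [if_pos h, h, mul_zero]
    symm
    have hsum : ∑ a', jointD M x0 p n hn x a' = 0 := (jointD_sum M x0 p n hn x).trans h
    exact (Finset.sum_eq_zero_iff_of_nonneg
      (fun a' _ => jointD_nonneg M x0 p n hn x a')).mp hsum a (Finset.mem_univ a)
  · rw [if_neg h]
    exact div_mul_cancel₀ _ h


variable [Nonempty A]

lemma ker_nonneg (p : HistPolicy M) (n : ℕ) (hn : n < M.T) (x : X) (a : A) :
    0 ≤ ker M x0 p n hn x a := by
  unfold ker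
  split
  · positivity
  · exact div_nonneg (jointD_nonneg M x0 p n hn x a) (stateD_nonneg M x0 p n hn.le x)

lemma ker_sum (p : HistPolicy M) (n : ℕ) (hn : n < M.T) (x : X) :
    ∑ a, ker M x0 p n hn x a = 1 := by
  unfold ker
  by_cases h : stateD M x0 p n hn.le x = 0
  · simp only [h, if_pos, Finset.sum_const, Finset.card_univ, nsmul_eq_mul]
    rw [mul_inv_cancel₀]
    exact_mod_cast Fintype.card_ne_zero
  · simp only [h, if_neg, ite_false]
    rw [← Finset.sum_div, jointD_sum, div_self h]

/-- The Markov policy built from `p`'s marginals. -/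
def mk (p : HistPolicy M) : HistPolicy M where
  π := fun t xs _ a => ker M x0 p t.val t.isLt (xs (Fin.last t.val)) a
  nonneg := fun t xs _ a => ker_nonneg M x0 p t.val t.isLt (xs (Fin.last t.val)) a
  sum_one := fun t xs _ => ker_sum M x0 p t.val t.isLt (xs (Fin.last t.val))

lemma mk_markov (p : HistPolicy M) : IsMarkov (mk M x0 p) := by
  intro t xs xs' as as' h
  funext a
  show ker M x0 p t.val t.isLt (xs (Fin.last t.val)) a = _
  rw [h]
  rfl

lemma Kfun_mk (p : HistPolicy M) (n : ℕ) (hn : n < M.T) (x : X) (a : A) :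
    Kfun M x0 (mk M x0 p) n hn x a =
      ker M x0 p n hn x a * stateD M x0 (mk M x0 p) n hn.le x := by
  unfold Kfun
  calc (∑ xs : Fin (n+1) → X, ∑ as : Fin n → A,
        (if xs (Fin.last n) = x then (1:ℝ) else 0) * phi M x0 (mk M x0 p) n hn.le xs as *
          (mk M x0 p).π ⟨n, hn⟩ xs as a)
      = ∑ xs : Fin (n+1) → X, ∑ as : Fin n → A,
          ker M x0 p n hn x a *
            ((if xs (Fin.last n) = x then (1:ℝ) else 0) * phi M x0 (mk M x0 p) n hn.le xs as) := by
        refine Finset.sum_congr rfl fun xs _ => Finset.sum_congr rfl fun as _ => ?_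
        by_cases hx : xs (Fin.last n) = x
        · have : (mk M x0 p).π ⟨n, hn⟩ xs as a = ker M x0 p n hn x a := by
            show ker M x0 p n hn (xs (Fin.last n)) a = _
            rw [hx]
          rw [this]; ring
        · simp [hx]
    _ = ker M x0 p n hn x a * stateD M x0 (mk M x0 p) n hn.le x := by
        simp only [← Finset.mul_sum]
        congr 1
        unfold stateD Ssum
        exact Finset.sum_congr rfl fun xs _ => Finset.mul_sum _ _ _

lemma stateD_mk (p : HistPolicy M) :
    ∀ (n : ℕ) (hn : n ≤ M.T) (x : X),
      stateD M x0 (mk M x0 p) n hn x = stateD M x0 p n hn x := by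
  intro n
  induction n with
  | zero => intro hn x; rw [stateD_zero, stateD_zero]
  | succ n IH =>
    intro hn x'
    have hn' : n < M.T := hn
    rw [stateD_succ M x0 (mk M x0 p) n hn x', stateD_succ M x0 p n hn x']
    refine Finset.sum_congr rfl fun x _ => Finset.sum_congr rfl fun a _ => ?_
    congr 1
    rw [Kfun_mk, IH hn'.le x, ker_mul, jointD_eq_Kfun]

lemma jointD_mk (p : HistPolicy M) (n : ℕ) (hn : n < M.T) (x : X) (a : A) :
    jointD M x0 (mk M x0 p) n hn x a = jointD M x0 p n hn x a := by
  rw [jointD_eq_Kfun, Kfun_mk, stateD_mk, ker_mul]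

lemma probEvent_joint (p : HistPolicy M) (t : Fin M.T) (x : X) (a : A) :
    probEvent M p x0 (fun τ => τ.1 t.castSucc = x ∧ τ.2 t = a) =
      jointD M x0 p t.val t.isLt x a := by
  rw [probEvent_eq_Ssum]
  unfold jointD
  refine Eq.trans ?_ (Ssum_lift M x0 p M.T le_rfl (t.val+1) t.isLt _)
  unfold Ssum
  refine Finset.sum_congr rfl fun xs _ => Finset.sum_congr rfl fun as _ => ?_
  congr 1
  by_cases h : ((xs, as) : Traj M).1 t.castSucc = x ∧ ((xs, as) : Traj M).2 t = a
  · exact (if_pos h).trans (if_pos h).symm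
  · exact (if_neg h).trans (if_neg h).symm

lemma probEvent_last (p : HistPolicy M) (x : X) :
    probEvent M p x0 (fun τ => τ.1 (Fin.last M.T) = x) = stateD M x0 p M.T le_rfl x := by
  rw [probEvent_eq_Ssum]
  rfl

lemma sum_weight_joint (p : HistPolicy M) (t : Fin M.T) (f : X → A → ℝ) :
    ∑ τ : Traj M, trajProb M p x0 τ * f (τ.1 t.castSucc) (τ.2 t)
      = ∑ x, ∑ a, probEvent M p x0 (fun τ => τ.1 t.castSucc = x ∧ τ.2 t = a) * f x a := by
  unfold probEvent
  simp only [Finset.sum_mul, ite_mul, zero_mul]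
  rw [Finset.sum_congr rfl fun x (_ : x ∈ Finset.univ) => Finset.sum_comm]
  rw [Finset.sum_comm]
  refine Finset.sum_congr rfl fun τ _ => ?_
  simp [ite_and, Finset.sum_ite_eq]

lemma sum_weight_last (p : HistPolicy M) (g : X → ℝ) :
    ∑ τ : Traj M, trajProb M p x0 τ * g (τ.1 (Fin.last M.T))
      = ∑ x, probEvent M p x0 (fun τ => τ.1 (Fin.last M.T) = x) * g x := by
  unfold probEvent
  simp only [Finset.sum_mul, ite_mul, zero_mul]
  rw [Finset.sum_comm]
  refine Finset.sum_congr rfl fun τ _ => ?_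
  simp [Finset.sum_ite_eq]

lemma J_repr (p : HistPolicy M) :
    J M p x0 = (∑ t : Fin M.T, ∑ x, ∑ a,
        probEvent M p x0 (fun τ => τ.1 t.castSucc = x ∧ τ.2 t = a) * M.r t x a)
      + ∑ x, probEvent M p x0 (fun τ => τ.1 (Fin.last M.T) = x) * M.rT x := by
  unfold J
  simp only [mul_add, Finset.sum_add_distrib, Finset.mul_sum]
  congr 1
  · rw [Finset.sum_comm]
    exact Finset.sum_congr rfl fun t _ => sum_weight_joint M x0 p t (M.r t)
  · exact sum_weight_last M x0 p (M.rT)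

end Aux

/-- For every history-dependent policy there is a Markov policy
with the same time-marginal distributions of `(X_t, A_t)` and of `X_T`; in
particular it attains the same objective value. -/
theorem markov_matching_marginals [Nonempty X] [Nonempty A]
    (M : MDP X A) (x0 : X) (p : HistPolicy M) :
    ∃ q : HistPolicy M, IsMarkov q ∧
      (∀ (t : Fin M.T) (x : X) (a : A),
        probEvent M q x0 (fun τ => τ.1 t.castSucc = x ∧ τ.2 t = a) =
          probEvent M p x0 (fun τ => τ.1 t.castSucc = x ∧ τ.2 t = a)) ∧
      (∀ x : X, probEvent M q x0 (fun τ => τ.1 (Fin.last M.T) = x) =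
          probEvent M p x0 (fun τ => τ.1 (Fin.last M.T) = x)) ∧
      J M q x0 = J M p x0 := by
  refine ⟨mk M x0 p, mk_markov M x0 p, ?_, ?_, ?_⟩
  · intro t x a
    rw [probEvent_joint, probEvent_joint, jointD_mk]
  · intro x
    rw [probEvent_last, probEvent_last, stateD_mk]
  · rw [J_repr, J_repr]
    congr 1
    · refine Finset.sum_congr rfl fun t _ => Finset.sum_congr rfl fun x _ =>
        Finset.sum_congr rfl fun a _ => ?_
      rw [probEvent_joint, probEvent_joint, jointD_mk]
    · refine Finset.sum_congr rfl fun x _ => ?_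
      rw [probEvent_last, probEvent_last, stateD_mk]

end
end
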